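/- arXiv:2602.10584 — 2 statements merged into one kernel-verified Lean document; each statement's English description precedes it below -/
import Mathlib

section
/- Let n be a positive integer and for each i < n let μ_i and ν_i be probability measures on a measurable space α_i, and let ε_i ≥ 0, δ_i ≥ 0 be reals such that μ_i(S) ≤ e^{ε_i}·ν_i(S) + δ_i for every measurable S ⊆ α_i. Then the product measures satisfy (⊗_i μ_i)(S) ≤ e^{∑_i ε_i}·(⊗_i ν_i)(S) + ∑_i δ_i for every measurable set S in the product space. That is, basic composition of n independent mechanisms that are each (ε_i, δ_i)-indistinguishable yields (∑ε_i, ∑δ_i)-indistinguishability. -/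
/-!
For a product of two factors, Tonelli writes `(μ₁ ⊗ μ₂)(S)` as the `μ₁`-integral of the slice
measures `μ₂(S_x) ≤ min (e₂ ν₂(S_x)) 1 + d₂`. The capped bound takes values in `[0, 1]`, and by
the layer-cake formula such a function is an average of indicators of measurable sets, so the
inequality for `(μ₁, ν₁)` extends from sets to it. Integrating gives the factors `e₁ e₂` and
`d₁ + d₂`; induction on the number of factors handles finite products.
-/

open MeasureTheory ENNReal Set

namespace MeasureTheory

variable {α β : Type*} [MeasurableSpace α] [MeasurableSpace β]

theorem lintegral_eq_setLIntegral_Ioo_meas_lt (ρ : Measure α) {g : α → ℝ≥0∞}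
    (hg : Measurable g) (hg1 : ∀ x, g x ≤ 1) :
    ∫⁻ x, g x ∂ρ = ∫⁻ t in Ioo 0 1, ρ {x | t < (g x).toReal} := by
  have hsupport : (fun t : ℝ => ρ {x | t < (g x).toReal}).support ⊆ Iio 1 := fun t ht => by
    by_contra ht1
    have hempty : {x | t < (g x).toReal} = ∅ := eq_empty_of_forall_notMem fun x hx =>
      (hx.trans_le (toReal_le_of_le_ofReal zero_le_one (by simpa using hg1 x))).not_ge
        (not_lt.1 ht1)
    exact ht ((congrArg ρ hempty).trans measure_empty)
  calc ∫⁻ x, g x ∂ρ = ∫⁻ x, ENNReal.ofReal (g x).toReal ∂ρ := by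
        simp_rw [ofReal_toReal ((hg1 _).trans_lt one_lt_top).ne]
    _ = ∫⁻ t in Ioi 0, ρ {x | t < (g x).toReal} :=
        lintegral_eq_lintegral_meas_lt ρ (.of_forall fun _ => toReal_nonneg)
          hg.ennreal_toReal.aemeasurable
    _ = ∫⁻ t in Ioo 0 1, ρ {x | t < (g x).toReal} := by
        rw [← setLIntegral_eq_of_support_subset hsupport,
          Measure.restrict_restrict measurableSet_Iio, Iio_inter_Ioi]

namespace Measure

/-- `e` plays the role of the multiplicative factor `exp ε`; it is kept in `ℝ≥0∞` so that
composition multiplies factors. -/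
def Indistinguishable (μ ν : Measure α) (e d : ℝ≥0∞) : Prop :=
  ∀ S, MeasurableSet S → μ S ≤ e * ν S + d

namespace Indistinguishable

variable {μ ν : Measure α} {e d : ℝ≥0∞}

theorem map (h : Indistinguishable μ ν e d) {f : α → β} (hf : Measurable f) :
    Indistinguishable (μ.map f) (ν.map f) e d := fun S hS => by
  rw [map_apply hf hS, map_apply hf hS]
  exact h _ (hf hS)

theorem lintegral_le (h : Indistinguishable μ ν e d) {g : α → ℝ≥0∞} (hg : Measurable g)
    (hg1 : ∀ x, g x ≤ 1) : ∫⁻ x, g x ∂μ ≤ e * ∫⁻ x, g x ∂ν + d := by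
  have hlevel : ∀ t : ℝ, MeasurableSet {x | t < (g x).toReal} := fun _ =>
    measurableSet_lt measurable_const hg.ennreal_toReal
  have hν_meas : Measurable fun t : ℝ => ν {x | t < (g x).toReal} :=
    Antitone.measurable fun _ _ hst => measure_mono fun _ hx => hst.trans_lt hx
  rw [lintegral_eq_setLIntegral_Ioo_meas_lt μ hg hg1,
    lintegral_eq_setLIntegral_Ioo_meas_lt ν hg hg1]
  calc ∫⁻ t in Ioo 0 1, μ {x | t < (g x).toReal}
      ≤ ∫⁻ t in Ioo 0 1, (e * ν {x | t < (g x).toReal} + d) :=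
        lintegral_mono fun t => h _ (hlevel t)
    _ = e * (∫⁻ t in Ioo 0 1, ν {x | t < (g x).toReal}) + d := by
        rw [lintegral_add_right _ measurable_const, lintegral_const_mul _ hν_meas,
          setLIntegral_const, Real.volume_Ioo, sub_zero, ofReal_one, mul_one]

theorem prod {μ₁ ν₁ : Measure α} {μ₂ ν₂ : Measure β} [IsProbabilityMeasure μ₁]
    [IsProbabilityMeasure μ₂] [SFinite ν₂] {e₁ e₂ d₁ d₂ : ℝ≥0∞}
    (h₁ : Indistinguishable μ₁ ν₁ e₁ d₁) (h₂ : Indistinguishable μ₂ ν₂ e₂ d₂) :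
    Indistinguishable (μ₁.prod μ₂) (ν₁.prod ν₂) (e₁ * e₂) (d₁ + d₂) := by
  intro S hS
  set g : α → ℝ≥0∞ := fun x => min (e₂ * ν₂ (Prod.mk x ⁻¹' S)) 1
  have hν₂_slice : Measurable fun x => ν₂ (Prod.mk x ⁻¹' S) :=
    measurable_measure_prodMk_left hS
  have hg : Measurable g := (hν₂_slice.const_mul e₂).min measurable_const
  have hμ₂_slice : ∀ x, μ₂ (Prod.mk x ⁻¹' S) ≤ g x + d₂ := fun x => by
    rw [← min_add_add_right]
    exact le_min (h₂ _ (measurable_prodMk_left hS)) (prob_le_one.trans le_self_add)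
  calc (μ₁.prod μ₂) S = ∫⁻ x, μ₂ (Prod.mk x ⁻¹' S) ∂μ₁ := prod_apply hS
    _ ≤ ∫⁻ x, (g x + d₂) ∂μ₁ := lintegral_mono hμ₂_slice
    _ = ∫⁻ x, g x ∂μ₁ + d₂ := by
        rw [lintegral_add_right _ measurable_const, lintegral_const, measure_univ, mul_one]
    _ ≤ e₁ * ∫⁻ x, g x ∂ν₁ + d₁ + d₂ := by
        gcongr
        exact h₁.lintegral_le hg fun x => min_le_right _ _
    _ ≤ e₁ * ∫⁻ x, e₂ * ν₂ (Prod.mk x ⁻¹' S) ∂ν₁ + d₁ + d₂ := by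
        gcongr with x
        exact min_le_left _ _
    _ = e₁ * e₂ * (ν₁.prod ν₂) S + (d₁ + d₂) := by
        rw [lintegral_const_mul _ hν₂_slice, ← prod_apply hS, mul_assoc, add_assoc]

theorem pi {n : ℕ} {α : Fin n → Type*} [∀ i, MeasurableSpace (α i)]
    {μ ν : ∀ i, Measure (α i)} [∀ i, IsProbabilityMeasure (μ i)] [∀ i, SigmaFinite (ν i)]
    {e d : Fin n → ℝ≥0∞}
    (h : ∀ i, Indistinguishable (μ i) (ν i) (e i) (d i)) :
    Indistinguishable (Measure.pi μ) (Measure.pi ν) (∏ i, e i) (∑ i, d i) := by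
  induction n with
  | zero =>
    intro S _
    simp [Measure.pi_of_empty μ, Measure.pi_of_empty ν]
  | succ n ih =>
    have hsplit := ((h 0).prod (ih fun j => h (Fin.succAbove 0 j))).map
      (MeasurableEquiv.piFinSuccAbove α 0).symm.measurable
    rwa [(measurePreserving_piFinSuccAbove μ 0).symm.map_eq,
      (measurePreserving_piFinSuccAbove ν 0).symm.map_eq, ← Fin.prod_univ_succAbove e 0,
      ← Fin.sum_univ_succAbove d 0] at hsplit

end Indistinguishable

end Measure

end MeasureTheory

theorem dp_basic_composition_general {n : ℕ} {α : Fin n → Type*}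
    [∀ i, MeasurableSpace (α i)] (μ ν : ∀ i, Measure (α i))
    [∀ i, IsProbabilityMeasure (μ i)] [∀ i, IsProbabilityMeasure (ν i)]
    (ε δ : Fin n → ℝ) (hδ : ∀ i, 0 ≤ δ i)
    (h : ∀ i, ∀ S : Set (α i), MeasurableSet S →
      μ i S ≤ ENNReal.ofReal (Real.exp (ε i)) * ν i S + ENNReal.ofReal (δ i)) :
    ∀ S : Set (∀ i, α i), MeasurableSet S →
      Measure.pi μ S ≤ ENNReal.ofReal (Real.exp (∑ i, ε i)) * Measure.pi ν S +
        ENNReal.ofReal (∑ i, δ i) := by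
  rw [Real.exp_sum, ENNReal.ofReal_prod_of_nonneg fun i _ => (Real.exp_pos _).le,
    ENNReal.ofReal_sum_of_nonneg fun i _ => hδ i]
  exact Measure.Indistinguishable.pi h

theorem dp_basic_composition {n : ℕ} (hn : 0 < n) {α : Fin n → Type*}
    [∀ i, MeasurableSpace (α i)] (μ ν : ∀ i, Measure (α i))
    [∀ i, IsProbabilityMeasure (μ i)] [∀ i, IsProbabilityMeasure (ν i)]
    (ε δ : Fin n → ℝ) (hε : ∀ i, 0 ≤ ε i) (hδ : ∀ i, 0 ≤ δ i)
    (h : ∀ i, ∀ S : Set (α i), MeasurableSet S →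
      μ i S ≤ ENNReal.ofReal (Real.exp (ε i)) * ν i S + ENNReal.ofReal (δ i)) :
    ∀ S : Set (∀ i, α i), MeasurableSet S →
      Measure.pi μ S ≤ ENNReal.ofReal (Real.exp (∑ i, ε i)) * Measure.pi ν S +
        ENNReal.ofReal (∑ i, δ i) :=
  dp_basic_composition_general μ ν ε δ hδ h
end

section
/- Let ε ∈ (0, 1), δ ∈ (0, 1), C > 0, and let σ ≥ √(2·ln(1.25/δ))/ε. Then for all μ, μ' ∈ ℝ with |μ − μ'| ≤ C and every measurable set S ⊆ ℝ, the Gaussian measures with standard deviation σC satisfy N(μ, σ²C²)(S) ≤ e^{ε}·N(μ', σ²C²)(S) + δ. That is, the one-dimensional Gaussian mechanism with sensitivity bound C and noise standard deviation σC is (ε, δ)-differentially private. -/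
/-!
The privacy loss `log (p_m(x) / p_{m'}(x)) = ((x - m')² - (x - m)²) / (2v)` of `N(m, v)` against
`N(m', v)` is affine in `x`. Off the set where it exceeds `ε` the density of `N(m, v)` is at most
`e^ε` times that of `N(m', v)`, so `N(m, v)(S) ≤ e^ε N(m', v)(S) + N(m, v)(loss > ε)`. Under
`N(m, v)` the loss has law `N(w/2, w)` with `w = (m - m')² / v`, and the calibration
`2 log(1.25/δ) (m - m')² ≤ ε² v` puts `ε` at least `s - 1/(2s)` standard deviations above the mean,
where `s = √(2 log(1.25/δ))`. When `log(1.25/δ) ≥ 1/4` the tail bound `e^{-t²/2}/2` gives `δ`;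
otherwise `δ > 0.93`, and half the mass plus a narrow strip next to the mean is small enough.
-/

open MeasureTheory ProbabilityTheory Real Set
open scoped NNReal ENNReal

theorem withDensity_apply_le_mul_of_le {α : Type*} [MeasurableSpace α] (ρ : Measure α) [SFinite ρ]
    {f g : α → ℝ≥0∞} (hg : Measurable g) {c : ℝ≥0∞} {S : Set α}
    (hfg : ∀ x ∈ S, f x ≤ c * g x) :
    ρ.withDensity f S ≤ c * ρ.withDensity g S := by
  rw [withDensity_apply' _ S, withDensity_apply' _ S, ← lintegral_const_mul c hg]
  exact setLIntegral_mono (hg.const_mul c) hfg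

theorem withDensity_apply_le_mul_add {α : Type*} [MeasurableSpace α] (ρ : Measure α) [SFinite ρ]
    {f g : α → ℝ≥0∞} (hg : Measurable g) (c : ℝ≥0∞) (S : Set α) :
    ρ.withDensity f S ≤ c * ρ.withDensity g S + ρ.withDensity f {x | c * g x < f x} := by
  set B := {x | c * g x < f x}
  calc ρ.withDensity f S ≤ ρ.withDensity f (S ∩ B) + ρ.withDensity f (S \ B) :=
        measure_le_inter_add_sdiff _ _ _
    _ ≤ ρ.withDensity f B + c * ρ.withDensity g (S \ B) := by
      gcongr
      · exact inter_subset_right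
      · exact withDensity_apply_le_mul_of_le ρ hg fun x hx => not_lt.mp hx.2
    _ ≤ c * ρ.withDensity g S + ρ.withDensity f B := by
      rw [add_comm]
      gcongr
      exact sdiff_subset

section Gaussian

variable {m m' : ℝ} {v : ℝ≥0}

noncomputable def gaussianPrivacyLoss (m m' : ℝ) (v : ℝ≥0) (x : ℝ) : ℝ :=
  ((x - m') ^ 2 - (x - m) ^ 2) / (2 * v)

theorem gaussianPDFReal_eq_exp_mul (x : ℝ) :
    gaussianPDFReal m v x = exp (gaussianPrivacyLoss m m' v x) * gaussianPDFReal m' v x := by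
  simp only [gaussianPDFReal, gaussianPrivacyLoss]
  rw [mul_left_comm, ← exp_add]
  ring_nf

theorem gaussianPDF_le_ofReal_exp_mul {ε x : ℝ} (hx : gaussianPrivacyLoss m m' v x ≤ ε) :
    gaussianPDF m v x ≤ ENNReal.ofReal (exp ε) * gaussianPDF m' v x := by
  rw [gaussianPDF, gaussianPDF, ← ENNReal.ofReal_mul (exp_nonneg ε), gaussianPDFReal_eq_exp_mul]
  gcongr
  exact gaussianPDFReal_nonneg _ _ _

theorem gaussianReal_le_exp_mul_add (hv : v ≠ 0) (ε : ℝ) (S : Set ℝ) :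
    gaussianReal m v S ≤ ENNReal.ofReal (exp ε) * gaussianReal m' v S +
      gaussianReal m v {x | ε < gaussianPrivacyLoss m m' v x} := by
  simp only [gaussianReal_of_var_ne_zero _ hv]
  refine (withDensity_apply_le_mul_add _ (measurable_gaussianPDF m' v)
    (ENNReal.ofReal (exp ε)) S).trans ?_
  refine add_le_add_right (measure_mono fun x hx => ?_) _
  by_contra h
  exact (gaussianPDF_le_ofReal_exp_mul (not_lt.mp h)).not_gt hx

theorem map_gaussianPrivacyLoss_gaussianReal (hv : v ≠ 0) {w : ℝ≥0}
    (hw : (w : ℝ) = (m - m') ^ 2 / v) :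
    (gaussianReal m v).map (gaussianPrivacyLoss m m' v) = gaussianReal (w / 2) w := by
  have hv' : (v : ℝ) ≠ 0 := by exact_mod_cast hv
  have haffine :
      gaussianPrivacyLoss m m' v = (· + (m' ^ 2 - m ^ 2) / (2 * v)) ∘ (((m - m') / v) * ·) := by
    ext x
    simp only [gaussianPrivacyLoss, Function.comp_apply]
    field_simp
    ring
  rw [haffine, ← Measure.map_map (by fun_prop) (by fun_prop), gaussianReal_map_const_mul,
    gaussianReal_map_add_const]
  congr 1
  · rw [hw]; field_simp; ring
  · ext; simp only [NNReal.coe_mul, NNReal.coe_mk, hw]; field_simp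

theorem gaussianReal_Ioi_self (hv : v ≠ 0) : gaussianReal m v (Ioi m) = 1 / 2 := by
  have : NullSingletonClass (gaussianReal m v) := nullSingletonClass_gaussianReal hv
  have hreflect : gaussianReal m v (Iio m) = gaussianReal m v (Ioi m) := by
    have h := gaussianReal_map_const_sub (μ := m) (v := v) (2 * m)
    rw [show 2 * m - m = m by ring] at h
    conv_rhs => rw [← h, Measure.map_apply (by fun_prop) measurableSet_Ioi]
    congr 1
    ext x
    simp only [mem_Iio, mem_preimage, mem_Ioi]
    constructor <;> intro <;> linarith
  have hsum : gaussianReal m v (Iic m) + gaussianReal m v (Ioi m) = 1 := by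
    rw [← measure_union (Iic_disjoint_Ioi le_rfl) measurableSet_Ioi, Iic_union_Ioi, measure_univ]
  rw [measure_congr Iio_ae_eq_Iic.symm, hreflect, ← two_mul] at hsum
  rw [ENNReal.eq_div_iff two_ne_zero ENNReal.ofNat_ne_top, hsum]

theorem gaussianReal_Ioi_add_le (hv : v ≠ 0) {b : ℝ} (hb : 0 ≤ b) :
    gaussianReal m v (Ioi (m + b)) ≤ ENNReal.ofReal (exp (-b ^ 2 / (2 * v)) / 2) := by
  -- compare with `N(m + b, v)`, which gives `Ioi (m + b)` mass `1 / 2`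
  have hloss : ∀ x ∈ Ioi (m + b), gaussianPrivacyLoss m (m + b) v x ≤ -b ^ 2 / (2 * v) := by
    intro x hx
    rw [gaussianPrivacyLoss]
    gcongr
    nlinarith [mem_Ioi.mp hx]
  calc gaussianReal m v (Ioi (m + b))
      ≤ ENNReal.ofReal (exp (-b ^ 2 / (2 * v))) * gaussianReal (m + b) v (Ioi (m + b)) := by
        simp only [gaussianReal_of_var_ne_zero _ hv]
        exact withDensity_apply_le_mul_of_le _ (measurable_gaussianPDF _ v)
          fun x hx => gaussianPDF_le_ofReal_exp_mul (hloss x hx)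
    _ = ENNReal.ofReal (exp (-b ^ 2 / (2 * v)) / 2) := by
        rw [gaussianReal_Ioi_self hv, ENNReal.ofReal_div_of_pos two_pos, ENNReal.ofReal_ofNat,
          mul_one_div]

theorem gaussianReal_le_mul_volume (hv : v ≠ 0) (s : Set ℝ) :
    gaussianReal m v s ≤ ENNReal.ofReal (√(2 * π * v))⁻¹ * volume s := by
  have hpdf (x : ℝ) : gaussianPDF m v x ≤ ENNReal.ofReal (√(2 * π * v))⁻¹ := by
    refine ENNReal.ofReal_le_ofReal (mul_le_of_le_one_right (by positivity) ?_)
    rw [exp_le_one_iff]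
    exact div_nonpos_of_nonpos_of_nonneg (neg_nonpos.mpr (sq_nonneg _)) (by positivity)
  rw [gaussianReal_apply m hv, ← setLIntegral_const]
  exact lintegral_mono hpdf

theorem gaussianReal_Ioi_sub_le (hv : v ≠ 0) {b : ℝ} (hb : 0 ≤ b) :
    gaussianReal m v (Ioi (m - b)) ≤ 1 / 2 + ENNReal.ofReal (b / √(2 * π * v)) := by
  have hstrip : gaussianReal m v (Ioc (m - b) m) ≤ ENNReal.ofReal (b / √(2 * π * v)) := by
    calc gaussianReal m v (Ioc (m - b) m)
        ≤ ENNReal.ofReal (√(2 * π * v))⁻¹ * volume (Ioc (m - b) m) :=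
          gaussianReal_le_mul_volume hv _
      _ = ENNReal.ofReal (b / √(2 * π * v)) := by
        rw [volume_Ioc, sub_sub_cancel, ← ENNReal.ofReal_mul (by positivity), inv_mul_eq_div]
  calc gaussianReal m v (Ioi (m - b))
        ≤ gaussianReal m v (Ioi m) + gaussianReal m v (Ioc (m - b) m) := by
        rw [add_comm, ← Ioc_union_Ioi_eq_Ioi (sub_le_self m hb)]
        exact measure_union_le _ _
    _ ≤ 1 / 2 + ENNReal.ofReal (b / √(2 * π * v)) := by
        rw [gaussianReal_Ioi_self hv]
        gcongr

theorem gaussianReal_Ioi_add_mul_sqrt_le_of_one_fourth_le (hv : v ≠ 0) {L t : ℝ} (hL : 1 / 4 ≤ L)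
    (ht : √(2 * L) - 1 / (2 * √(2 * L)) ≤ t) :
    gaussianReal m v (Ioi (m + t * √v)) ≤ ENNReal.ofReal (1.25 * exp (-L)) := by
  set s := √(2 * L)
  have hs2 : s ^ 2 = 2 * L := sq_sqrt (by linarith)
  have hs0 : 0 < s := sqrt_pos.mpr (by linarith)
  have hst : 0 ≤ s - 1 / (2 * s) := by
    rw [sub_nonneg, div_le_iff₀ (by positivity)]
    nlinarith
  have ht2 : 2 * L - 1 ≤ t ^ 2 := by
    have : (s - 1 / (2 * s)) ^ 2 = s ^ 2 - 1 + (1 / (2 * s)) ^ 2 := by field_simp; ring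
    nlinarith [pow_le_pow_left₀ hst ht 2, sq_nonneg (1 / (2 * s))]
  -- the constant `1.25` of the calibration absorbs `exp (1 / 2) / 2`
  have hexp_half : exp (1 / 2) ≤ 2.5 := by
    have h : exp (1 / 2) * exp (1 / 2) = exp 1 := by rw [← exp_add]; norm_num
    nlinarith [exp_one_lt_d9, exp_pos (1 / 2)]
  refine (gaussianReal_Ioi_add_le hv (mul_nonneg (hst.trans ht) (sqrt_nonneg v))).trans
    (ENNReal.ofReal_le_ofReal ?_)
  calc exp (-(t * √v) ^ 2 / (2 * v)) / 2 = exp (-t ^ 2 / 2) / 2 := by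
        rw [mul_pow, sq_sqrt v.coe_nonneg]
        field_simp
    _ ≤ exp (1 / 2) * exp (-L) / 2 := by
        rw [← exp_add]
        gcongr
        linarith
    _ ≤ 1.25 * exp (-L) := by nlinarith [exp_pos (-L)]

theorem gaussianReal_Ioi_add_mul_sqrt_le_of_le_one_fourth (hv : v ≠ 0) {L t : ℝ} (hL : 1 / 5 ≤ L)
    (hL4 : L ≤ 1 / 4) (ht : -(1 / (2 * √(2 * L))) ≤ t) :
    gaussianReal m v (Ioi (m + t * √v)) ≤ ENNReal.ofReal (1.25 * exp (-L)) := by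
  set s := √(2 * L)
  have hs0 : 0 < s := sqrt_pos.mpr (by linarith)
  have hs : 0.6 ≤ s := by
    rw [le_sqrt (by norm_num) (by positivity)]
    linarith
  have hpi : 2.5 ≤ √(2 * π) := by
    rw [le_sqrt (by norm_num) (by positivity)]
    nlinarith [pi_gt_d2]
  have hsub : Ioi (m + t * √v) ⊆ Ioi (m - √v / (2 * s)) := by
    refine Ioi_subset_Ioi ?_
    calc m - √v / (2 * s) = m + -(1 / (2 * s)) * √v := by ring
      _ ≤ m + t * √v := by gcongr
  have hstrip : √v / (2 * s) / √(2 * π * v) ≤ 1 / 3 := by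
    have : 1.5 ≤ s * √(2 * π) := by nlinarith
    rw [sqrt_mul' _ v.coe_nonneg, div_div, div_le_iff₀ (by positivity)]
    nlinarith [mul_le_mul_of_nonneg_right this (sqrt_nonneg v)]
  have hmass : 1 / 2 + 1 / 3 ≤ 1.25 * exp (-L) := by nlinarith [add_one_le_exp (-L)]
  refine (measure_mono hsub).trans ((gaussianReal_Ioi_sub_le hv (by positivity)).trans ?_)
  rw [← ENNReal.ofReal_ofNat 2, ← ENNReal.ofReal_one, ← ENNReal.ofReal_div_of_pos two_pos,
    ← ENNReal.ofReal_add (by norm_num) (by positivity)]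
  exact ENNReal.ofReal_le_ofReal (by linarith)

theorem gaussianReal_Ioi_add_mul_sqrt_le (hv : v ≠ 0) {δ t : ℝ} (hδ0 : 0 < δ) (hδ1 : δ < 1)
    (ht : √(2 * log (1.25 / δ)) - 1 / (2 * √(2 * log (1.25 / δ))) ≤ t) :
    gaussianReal m v (Ioi (m + t * √v)) ≤ ENNReal.ofReal δ := by
  set L := log (1.25 / δ)
  have hδL : δ = 1.25 * exp (-L) := by
    rw [exp_neg, exp_log (by positivity)]
    field_simp
  have hL : 1 / 5 ≤ L := by
    have h : 1 - δ / 1.25 ≤ L := by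
      simpa only [inv_div] using one_sub_inv_le_log_of_pos (x := 1.25 / δ) (by positivity)
    norm_num at h
    linarith
  rw [hδL]
  rcases le_total (1 / 4) L with hL4 | hL4
  · exact gaussianReal_Ioi_add_mul_sqrt_le_of_one_fourth_le hv hL4 ht
  · refine gaussianReal_Ioi_add_mul_sqrt_le_of_le_one_fourth hv hL hL4 ?_
    linarith [sqrt_nonneg (2 * L)]

theorem gaussianReal_setOf_lt_gaussianPrivacyLoss_le (hv : v ≠ 0) {ε δ : ℝ} (hε0 : 0 ≤ ε)
    (hε1 : ε ≤ 1) (hδ0 : 0 < δ) (hδ1 : δ < 1)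
    (hcal : 2 * log (1.25 / δ) * (m - m') ^ 2 ≤ ε ^ 2 * v) :
    gaussianReal m v {x | ε < gaussianPrivacyLoss m m' v x} ≤ ENNReal.ofReal δ := by
  rcases eq_or_ne m m' with rfl | hmm'
  · simp [gaussianPrivacyLoss, hε0.not_gt]
  have hv0 : (0 : ℝ) < v := by positivity
  let w : ℝ≥0 := ⟨(m - m') ^ 2 / v, by positivity⟩
  have hw : (w : ℝ) = (m - m') ^ 2 / v := rfl
  have hw0 : (0 : ℝ) < w := by
    rw [hw]
    exact div_pos (pow_pos (abs_pos.mpr (sub_ne_zero.mpr hmm')) 2 |>.trans_eq (sq_abs _)) hv0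
  have hL : 0 < 2 * log (1.25 / δ) :=
    mul_pos two_pos (log_pos (by rw [lt_div_iff₀ hδ0]; linarith))
  set s := √(2 * log (1.25 / δ))
  have hs0 : 0 < s := sqrt_pos.mpr hL
  have hsw : s * √w ≤ ε := by
    rw [← sqrt_mul hL.le, sqrt_le_left hε0, hw, ← mul_div_assoc, div_le_iff₀ hv0]
    exact hcal
  have ht : s - 1 / (2 * s) ≤ (ε - w / 2) / √w := by
    have hsw1 : s * √w ≤ 1 := hsw.trans hε1
    have hhalf : √w ^ 2 / 2 ≤ √w / (2 * s) := by
      rw [le_div_iff₀ (by positivity)]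
      nlinarith [sqrt_nonneg w]
    rw [le_div_iff₀ (sqrt_pos.mpr hw0)]
    calc (s - 1 / (2 * s)) * √w = s * √w - √w / (2 * s) := by ring
      _ ≤ ε - √w ^ 2 / 2 := by linarith
      _ = ε - w / 2 := by rw [sq_sqrt w.coe_nonneg]
  have hloss : Measurable (gaussianPrivacyLoss m m' v) := by
    unfold gaussianPrivacyLoss; fun_prop
  have key := gaussianReal_Ioi_add_mul_sqrt_le (m := w / 2) (ne_of_gt hw0) hδ0 hδ1 ht
  rw [div_mul_cancel₀ _ (sqrt_pos.mpr hw0).ne', add_sub_cancel,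
    ← map_gaussianPrivacyLoss_gaussianReal hv rfl, Measure.map_apply hloss measurableSet_Ioi] at key
  exact key

theorem gaussianReal_le_exp_mul_add_ofReal (hv : v ≠ 0) {ε δ : ℝ} (hε0 : 0 ≤ ε) (hε1 : ε ≤ 1)
    (hδ0 : 0 < δ) (hδ1 : δ < 1) (hcal : 2 * log (1.25 / δ) * (m - m') ^ 2 ≤ ε ^ 2 * v)
    (S : Set ℝ) :
    gaussianReal m v S ≤ ENNReal.ofReal (exp ε) * gaussianReal m' v S + ENNReal.ofReal δ :=
  (gaussianReal_le_exp_mul_add hv ε S).trans <| add_le_add_right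
    (gaussianReal_setOf_lt_gaussianPrivacyLoss_le hv hε0 hε1 hδ0 hδ1 hcal) _

end Gaussian

theorem gaussian_mechanism_dp (ε δ C σ : ℝ) (hε : ε ∈ Set.Ioo (0 : ℝ) 1)
    (hδ : δ ∈ Set.Ioo (0 : ℝ) 1) (hC : 0 < C)
    (hσ : Real.sqrt (2 * Real.log (1.25 / δ)) / ε ≤ σ) :
    ∀ μ μ' : ℝ, |μ - μ'| ≤ C → ∀ S : Set ℝ, MeasurableSet S →
      gaussianReal μ (Real.toNNReal (σ ^ 2 * C ^ 2)) S ≤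
        ENNReal.ofReal (Real.exp ε) *
            gaussianReal μ' (Real.toNNReal (σ ^ 2 * C ^ 2)) S +
          ENNReal.ofReal δ := by
  intro μ μ' hμμ' S _
  have hL : 0 < 2 * log (1.25 / δ) :=
    mul_pos two_pos (log_pos (by rw [lt_div_iff₀ hδ.1]; linarith [hδ.2]))
  rw [div_le_iff₀ hε.1, mul_comm σ] at hσ
  have hσ0 : 0 < σ := pos_of_mul_pos_right ((sqrt_pos.mpr hL).trans_le hσ) hε.1.le
  have hΔ : (μ - μ') ^ 2 ≤ C ^ 2 := sq_le_sq' (abs_le.mp hμμ').1 (abs_le.mp hμμ').2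
  have hcal : 2 * log (1.25 / δ) * (μ - μ') ^ 2 ≤ ε ^ 2 * (σ ^ 2 * C ^ 2).toNNReal := by
    rw [coe_toNNReal _ (by positivity), ← mul_assoc, ← mul_pow]
    exact mul_le_mul ((sqrt_le_left (mul_pos hε.1 hσ0).le).mp hσ) hΔ (sq_nonneg _) (sq_nonneg _)
  have hv : (σ ^ 2 * C ^ 2).toNNReal ≠ 0 := (toNNReal_pos.mpr (by positivity)).ne'
  exact gaussianReal_le_exp_mul_add_ofReal hv hε.1.le hε.2.le hδ.1 hδ.2 hcal S
end
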